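/- For a covering family H ⊂ F(T) and a function g : X* → ℝ̄, a point x belongs to ∂g(a*) if and only if g(a*) + g*(x) = ⟨a*, x⟩; in particular, if {f; f_t, t ∈ T} ⊂ Γ(X), E ∩ dom f ≠ ∅ and x ∈ ∂φ_H(0_{X*}), then x ∈ E and f(x) = −φ_H(0_{X*}) = sup(D_H) = inf(P). -/

import Mathlib

open Pointwise Filter Topology

noncomputable section

section Defs

variable {T : Type*} {X : Type*} [AddCommGroup X] [Module ℝ X] [TopologicalSpace X]
  [IsTopologicalAddGroup X] [ContinuousSMul ℝ X] [LocallyConvexSpace ℝ X] [T2Space X]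

/-- The epigraph of an extended-real-valued function, as a subset of `Z × ℝ`. -/
def epiSet {Z : Type*} (f : Z → EReal) : Set (Z × ℝ) := {p | f p.1 ≤ (p.2 : EReal)}

/-- `f : Z → ℝ ∪ {+∞}` is a proper convex function (never `⊥`, not identically `⊤`,
with convex epigraph). -/
def IsProperConvex {Z : Type*} [AddCommGroup Z] [Module ℝ Z] (f : Z → EReal) : Prop :=
  (∀ x, f x ≠ ⊥) ∧ (∃ x, f x ≠ ⊤) ∧ Convex ℝ (epiSet f)

/-- Membership in `Γ(Z)`: proper convex and lower semicontinuous. -/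
def InGamma {Z : Type*} [AddCommGroup Z] [Module ℝ Z] [TopologicalSpace Z] (f : Z → EReal) : Prop :=
  IsProperConvex f ∧ LowerSemicontinuous f

/-- The Lagrangian `f + ∑_{t ∈ H} λ_t f_t` (with the convention `0·(+∞) = 0`,
which holds for `EReal` multiplication). -/
def lagFn (f : X → EReal) (ft : T → X → EReal) (H : Finset T) (lam : T → ℝ) : X → EReal :=
  fun x => f x + ∑ t ∈ H, (lam t : EReal) * ft t x

/-- The feasible set `E` of (P). -/
def feasSet (ft : T → X → EReal) : Set X := {x | ∀ t, ft t x ≤ 0}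

/-- The optimal value `inf (P)`. -/
def primalVal (f : X → EReal) (ft : T → X → EReal) : EReal := ⨅ x ∈ feasSet ft, f x

/-- The optimal solution set `sol (P)`. -/
def solP (f : X → EReal) (ft : T → X → EReal) : Set X :=
  {x | x ∈ feasSet ft ∧ f x = primalVal f ft}

/-- The optimal value `sup (D_H)` of the `H`-dual problem. -/
def dualVal (f : X → EReal) (ft : T → X → EReal) (Hfam : Set (Finset T)) : EReal :=
  ⨆ H ∈ Hfam, ⨆ lam ∈ {l : T → ℝ | ∀ t ∈ H, 0 ≤ l t}, ⨅ x : X, lagFn f ft H lam x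

/-- The optimal value `sup (D)` of the classical Lagrangian-Haar dual, with
multipliers `λ ∈ ℝ_+^{(T)}` (finitely supported). -/
def dualHaar (f : X → EReal) (ft : T → X → EReal) : EReal :=
  ⨆ lam ∈ {l : T →₀ ℝ | ∀ t, 0 ≤ l t},
    ⨅ x : X, f x + ∑ t ∈ lam.support, ((lam t : ℝ) : EReal) * ft t x

/-- `sup (D_m)`: ordinary Lagrangian dual of the finite subproblem `(P_m)`. -/
def dualValFin (f : X → EReal) (ft : ℕ → X → EReal) (m : ℕ) : EReal :=
  ⨆ lam ∈ {l : ℕ → ℝ | ∀ k ∈ Finset.range m, 0 ≤ l k},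
    ⨅ x : X, f x + ∑ k ∈ Finset.range m, (lam k : EReal) * ft k x

/-- `inf (P_m)`: optimal value of the finite subproblem `(P_m)`. -/
def primalValFin (f : X → EReal) (ft : ℕ → X → EReal) (m : ℕ) : EReal :=
  ⨅ x ∈ {x : X | ∀ k ∈ Finset.range m, ft k x ≤ 0}, f x

/-- A family of finite subsets of `T` is covering if its union is all of `T`. -/
def CoveringFam (Hfam : Set (Finset T)) : Prop := (⋃ H ∈ Hfam, (H : Set T)) = Set.univ

/-- A family of finite subsets of `T` is directed (by inclusion). -/
def DirectedFam (Hfam : Set (Finset T)) : Prop :=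
  ∀ H ∈ Hfam, ∀ K ∈ Hfam, ∃ L ∈ Hfam, (H : Set T) ∪ (K : Set T) ⊆ (L : Set T)

/-- Legendre-Fenchel conjugate of `f : X → ℝ̄`, as a function on the dual `X*`
(with its weak* topology). -/
def conj (f : X → EReal) (p : WeakDual ℝ X) : EReal := ⨆ x : X, ((p x : EReal) - f x)

/-- Legendre-Fenchel conjugate of `g : X* → ℝ̄` w.r.t. the duality `⟨X*, X⟩`. -/
def conjDual (g : WeakDual ℝ X → EReal) (x : X) : EReal :=
  ⨆ p : WeakDual ℝ X, ((p x : EReal) - g p)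

/-- The function `φ_H := inf_{H ∈ 𝓗, λ ∈ ℝ_+^H} (f + ∑_{t ∈ H} λ_t f_t)^*`. -/
def phiVal (f : X → EReal) (ft : T → X → EReal) (Hfam : Set (Finset T))
    (p : WeakDual ℝ X) : EReal :=
  ⨅ H ∈ Hfam, ⨅ lam ∈ {l : T → ℝ | ∀ t ∈ H, 0 ≤ l t}, conj (lagFn f ft H lam) p

/-- Subdifferential at `a ∈ X*` of a function `g : X* → ℝ̄`, a subset of `X`
(empty when `g a ∉ ℝ`). -/
def dualSubdiff (g : WeakDual ℝ X → EReal) (a : WeakDual ℝ X) : Set X :=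
  {x | (g a ≠ ⊤ ∧ g a ≠ ⊥) ∧ ∀ q : WeakDual ℝ X, g a + (((q x - a x : ℝ)) : EReal) ≤ g q}

/-- Fenchel subdifferential of `g : X → ℝ̄` at `x̄ ∈ X`, a subset of `X*`. -/
def fenchelSubdiff (g : X → EReal) (xb : X) : Set (WeakDual ℝ X) :=
  {p | ∀ x, g xb + (((p x - p xb : ℝ)) : EReal) ≤ g x}

/-- The set `𝓐_H = ⋃_{H ∈ 𝓗, λ ∈ ℝ_+^H} epi (f + ∑_{t∈H} λ_t f_t)^* ⊆ X* × ℝ`. -/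
def AHset (f : X → EReal) (ft : T → X → EReal) (Hfam : Set (Finset T)) :
    Set (WeakDual ℝ X × ℝ) :=
  ⋃ H ∈ Hfam, ⋃ lam ∈ {l : T → ℝ | ∀ t ∈ H, 0 ≤ l t}, epiSet (conj (lagFn f ft H lam))

/-- `A` is closed convex regarding `B`: `cl (co A) ∩ B = A ∩ B`. -/
def ClosedConvexRegarding {Z : Type*} [AddCommGroup Z] [Module ℝ Z] [TopologicalSpace Z]
    (A B : Set Z) : Prop :=
  closure (convexHull ℝ A) ∩ B = A ∩ B

/-- Recession cone of a set. -/
def recCone {Z : Type*} [AddCommGroup Z] [SMul ℝ Z] (A : Set Z) : Set Z :=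
  {v | ∀ a ∈ A, ∀ r : ℝ, 0 ≤ r → a + r • v ∈ A}

/-- Recession function `h_∞`, defined through `epi h_∞ = (epi h)_∞`. -/
def recFn (h : X → EReal) (x : X) : EReal :=
  ⨅ r ∈ {r : ℝ | (x, r) ∈ recCone (epiSet h)}, (r : EReal)

/-- The recession cone `(P)_∞ = ∩_{t∈T} [(f_t)_∞ ≤ 0] ∩ [f_∞ ≤ 0]` of problem (P). -/
def PinfSet (f : X → EReal) (ft : T → X → EReal) : Set X :=
  {x | recFn f x ≤ 0 ∧ ∀ t, recFn (ft t) x ≤ 0}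

/-- A subset is a linear subspace. -/
def IsLinSubspace {Z : Type*} [AddCommGroup Z] [Module ℝ Z] (S : Set Z) : Prop :=
  ∃ V : Submodule ℝ Z, S = ↑V

/-- Negative polar cone `A^-` of a set `A ⊆ X*`. -/
def negPolar (A : Set (WeakDual ℝ X)) : Set X := {x | ∀ p ∈ A, p x ≤ 0}

/-- The convex cone generated by a set: `cone A = ℝ₊ (co A)`. -/
def coneGen {Z : Type*} [AddCommGroup Z] [Module ℝ Z] (A : Set Z) : Set Z :=
  {z | ∃ r : ℝ, 0 ≤ r ∧ ∃ a ∈ convexHull ℝ A, z = r • a}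

/-- A set is weakly compact: compact for the weak topology `σ(X, X*)`. -/
def WeaklyCompactSet (S : Set X) : Prop := IsCompact (toWeakSpace ℝ X '' S)

/-- A set is weakly locally compact: locally compact in the weak topology. -/
def WeaklyLocallyCompactSet (S : Set X) : Prop :=
  LocallyCompactSpace ↥(toWeakSpace ℝ X '' S)

/-- `h` is weakly inf-locally compact: every sublevel set `[h ≤ r]`, `r ∈ ℝ`,
is weakly locally compact. -/
def InfWeaklyLocallyCompact (h : X → EReal) : Prop :=
  ∀ r : ℝ, WeaklyLocallyCompactSet {x | h x ≤ (r : EReal)}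

/-- The Mackey topology `τ(X*, X)` on `X*`: the topology of uniform convergence on
convex balanced weakly compact subsets of `X`. -/
def mackeyTopology (X : Type*) [AddCommGroup X] [Module ℝ X] [TopologicalSpace X]
    [IsTopologicalAddGroup X] [ContinuousSMul ℝ X] [LocallyConvexSpace ℝ X] [T2Space X] :
    TopologicalSpace (WeakDual ℝ X) :=
  TopologicalSpace.induced
    (fun p => UniformOnFun.ofFun {K : Set X | Convex ℝ K ∧ Balanced ℝ K ∧ WeaklyCompactSet K}
      (fun x => p x))
    inferInstance

/-- Interior of `S` relative to `A` for the topology `τ`. -/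
def relIntIn {Z : Type*} (τ : TopologicalSpace Z) (A S : Set Z) : Set Z :=
  {z | z ∈ S ∧ ∃ U, τ.IsOpen U ∧ z ∈ U ∧ U ∩ A ⊆ S}

/-- `g : X* → ℝ̄` is `τ(X*,X)`-quasicontinuous: the affine hull of `dom g` is
Mackey-closed and of finite codimension, the Mackey relative interior of `dom g`
is non-empty, and the restriction of `g` to `aff (dom g)` is Mackey-continuous
on `ri (dom g)`. -/
def MackeyQuasicontinuous (g : WeakDual ℝ X → EReal) : Prop :=
  @IsClosed _ (mackeyTopology X)
    ((affineSpan ℝ {p : WeakDual ℝ X | g p ≠ ⊤}) : Set (WeakDual ℝ X)) ∧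
  FiniteDimensional ℝ (WeakDual ℝ X ⧸ (affineSpan ℝ {p : WeakDual ℝ X | g p ≠ ⊤}).direction) ∧
  (relIntIn (mackeyTopology X) ((affineSpan ℝ {p : WeakDual ℝ X | g p ≠ ⊤}) : Set (WeakDual ℝ X))
    {p : WeakDual ℝ X | g p ≠ ⊤}).Nonempty ∧
  ∀ p ∈ relIntIn (mackeyTopology X)
      ((affineSpan ℝ {p : WeakDual ℝ X | g p ≠ ⊤}) : Set (WeakDual ℝ X))
      {p : WeakDual ℝ X | g p ≠ ⊤},
    @ContinuousWithinAt _ _ (mackeyTopology X) _ g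
      ((affineSpan ℝ {p : WeakDual ℝ X | g p ≠ ⊤}) : Set (WeakDual ℝ X)) p

/-- The set `𝓚_H = ⋃_{H ∈ 𝓗} cone ({(a_t*, b_t) : t ∈ H} + {0} × ℝ₊)`. -/
def KHset (a : T → WeakDual ℝ X) (b : T → ℝ) (Hfam : Set (Finset T)) :
    Set (WeakDual ℝ X × ℝ) :=
  ⋃ H ∈ Hfam, coneGen ((fun t => (a t, b t)) '' (H : Set T) + ({0} ×ˢ Set.Ici (0 : ℝ)))

end Defs

/-!
Every continuous affine minorant `q + β` of a Lagrangian `f + ∑_{t∈H} λ_t f_t` gives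
`φ_𝓗(q) ≤ -β`, hence `q x + β ≤ φ_𝓗^*(x)`. Since functions of `Γ(X)` are suprema of their
continuous affine minorants (Hahn–Banach separation from the closed convex epigraph), this
yields `f ≤ φ_𝓗^*` (take `λ = 0`) and `φ_𝓗^* = +∞` outside `E` (take `λ = n e_s` with
`f_s(x) > 0` and let `n → ∞`). If `x ∈ ∂φ_𝓗(0)`, the Fenchel–Young equality gives
`φ_𝓗^*(x) = -φ_𝓗(0) = sup (D_𝓗)`, which is finite; so `x ∈ E`, and weak duality closes the chain
`sup (D_𝓗) ≤ inf (P) ≤ f(x) ≤ sup (D_𝓗)`.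
-/

namespace EReal

theorem coe_sub_le_coe_iff {a b : ℝ} {y : EReal} :
    (a : EReal) - y ≤ b ↔ ((a - b : ℝ) : EReal) ≤ y := by
  induction y using EReal.rec
  · simp only [coe_sub_bot, top_le_iff, coe_ne_top, le_bot_iff, coe_ne_bot]
  · norm_cast; constructor <;> intro <;> linarith
  · simp

theorem coe_le_iff_forall_le_coe {a : ℝ} {y : EReal} :
    (a : EReal) ≤ y ↔ ∀ r : ℝ, y ≤ r → a ≤ r := by
  induction y using EReal.rec
  · simpa using ⟨a - 1, by linarith⟩
  · norm_cast; exact ⟨fun h r hr => h.trans hr, fun h => h _ le_rfl⟩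
  · simp

theorem neg_iInf {ι : Sort*} (f : ι → EReal) : -⨅ i, f i = ⨆ i, -f i :=
  negOrderIso.map_iInf f

theorem neg_iSup {ι : Sort*} (f : ι → EReal) : -⨆ i, f i = ⨅ i, -f i :=
  negOrderIso.map_iSup f

theorem exists_coe_of_add_eq_coe {x y : EReal} {c : ℝ} (h : x + y = c) :
    ∃ a b : ℝ, x = a ∧ y = b ∧ a + b = c := by
  induction x using EReal.rec <;> induction y using EReal.rec <;> simp_all
  norm_cast at h

end EReal

theorem exists_nonneg_lt_add_mul {δ : ℝ} (hδ : 0 < δ) (a b : ℝ) :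
    ∃ n : ℝ, 0 ≤ n ∧ b < a + n * δ :=
  ⟨|b - a| / δ + 1, by positivity, by
    rw [add_mul, div_mul_cancel₀ _ hδ.ne', one_mul]; linarith [le_abs_self (b - a)]⟩

theorem LowerSemicontinuous.isClosed_epiSet {Z : Type*} [TopologicalSpace Z] {g : Z → EReal}
    (hg : LowerSemicontinuous g) : IsClosed (epiSet g) :=
  (lowerSemicontinuous_iff_isClosed_epigraph.1 hg).preimage
    (continuous_fst.prodMk (continuous_coe_real_ereal.comp continuous_snd))

section AffineMinorant

variable {X : Type*} [AddCommGroup X] [Module ℝ X] [TopologicalSpace X]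

def IsAffineMinorant (g : X → EReal) (q : X →L[ℝ] ℝ) (β : ℝ) : Prop :=
  ∀ z, ((q z + β : ℝ) : EReal) ≤ g z

variable {g : X → EReal}

theorem isAffineMinorant_iff_forall_mem_epiSet {q : X →L[ℝ] ℝ} {β : ℝ} :
    IsAffineMinorant g q β ↔ ∀ z r, (z, r) ∈ epiSet g → q z + β ≤ r := by
  simp only [IsAffineMinorant, EReal.coe_le_iff_forall_le_coe, epiSet, Set.mem_ofPred_eq]

theorem IsAffineMinorant.add_mul {h : X → EReal} {q₀ q₁ : X →L[ℝ] ℝ} {β₀ β₁ n : ℝ}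
    (h₀ : IsAffineMinorant g q₀ β₀) (h₁ : IsAffineMinorant h q₁ β₁) (hn : 0 ≤ n) :
    IsAffineMinorant (fun z => g z + n * h z) (q₀ + n • q₁) (β₀ + n * β₁) := fun z => by
  have hmul : ((n * (q₁ z + β₁) : ℝ) : EReal) ≤ n * h z := by
    rw [EReal.coe_mul]; exact mul_le_mul_of_nonneg_left (h₁ z) (EReal.coe_nonneg.2 hn)
  calc (((q₀ + n • q₁) z + (β₀ + n * β₁) : ℝ) : EReal)
      = ((q₀ z + β₀ : ℝ) : EReal) + ((n * (q₁ z + β₁) : ℝ) : EReal) := by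
        norm_cast; simp only [add_apply, smul_apply, smul_eq_mul]; ring
    _ ≤ g z + n * h z := add_le_add (h₀ z) hmul

theorem isAffineMinorant_of_forall_mem_epiSet {p : X →L[ℝ] ℝ} {γ u : ℝ} (hγ : 0 < γ)
    (h : ∀ z r, (z, r) ∈ epiSet g → u < p z + γ * r) :
    IsAffineMinorant g (-γ⁻¹ • p) (u / γ) := by
  refine isAffineMinorant_iff_forall_mem_epiSet.2 fun z r hzr => ?_
  have hsep := h z r hzr
  have hval : (-γ⁻¹ • p) z + u / γ = (u - p z) / γ := by
    simp only [smul_apply, smul_eq_mul]; ring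
  rw [hval, div_le_iff₀ hγ]
  linarith

variable [IsTopologicalAddGroup X] [ContinuousSMul ℝ X] [LocallyConvexSpace ℝ X]

theorem InGamma.exists_separation (hg : InGamma g) {x : X} {c : ℝ} (hc : ¬ g x ≤ c) :
    ∃ (p : X →L[ℝ] ℝ) (γ u : ℝ), 0 ≤ γ ∧ p x + γ * c < u ∧
      ∀ z r, (z, r) ∈ epiSet g → u < p z + γ * r := by
  obtain ⟨⟨hbot, ⟨z₀, hz₀⟩, hconv⟩, hlsc⟩ := hg
  obtain ⟨F, u, hFx, hF⟩ :=
    geometric_hahn_banach_point_closed hconv hlsc.isClosed_epiSet (x := (x, c)) hc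
  have hFapply : ∀ z r, F (z, r) = F (z, 0) + F (0, 1) * r := fun z r => by
    rw [mul_comm, ← smul_eq_mul, ← map_smul, ← map_add, Prod.smul_mk, smul_zero, smul_eq_mul,
      mul_one, Prod.mk_add_mk, add_zero, zero_add]
  refine ⟨F.comp (.inl ℝ X ℝ), F (0, 1), u, ?_, by rw [hFapply] at hFx; exact hFx,
    fun z r hzr => by have := hF _ hzr; rw [hFapply] at this; exact this⟩
  lift g z₀ to ℝ using ⟨hz₀, hbot z₀⟩ with v hv
  by_contra! hneg
  have hup : ∀ m : ℝ, 0 ≤ m → u < F (z₀, 0) + F (0, 1) * v + m * F (0, 1) := fun m hm => by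
    have := hF (z₀, v + m) (by
      simp only [epiSet, Set.mem_ofPred_eq, ← hv]; exact_mod_cast (by linarith : v ≤ v + m))
    rw [hFapply] at this; linarith
  obtain ⟨m, hm, hlt⟩ := exists_nonneg_lt_add_mul (neg_pos.2 hneg) 0
    (F (z₀, 0) + F (0, 1) * v - u)
  linarith [hup m hm]

theorem InGamma.exists_isAffineMinorant (hg : InGamma g) :
    ∃ (q : X →L[ℝ] ℝ) (β : ℝ), IsAffineMinorant g q β := by
  obtain ⟨z₀, hz₀⟩ := hg.1.2.1
  lift g z₀ to ℝ using ⟨hz₀, hg.1.1 z₀⟩ with v hv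
  obtain ⟨p, γ, u, hγ, hlt, hsep⟩ :=
    hg.exists_separation (x := z₀) (c := v - 1) (by rw [← hv]; norm_cast; linarith)
  have hγpos : 0 < γ := hγ.lt_of_ne fun h => by
    have := hsep z₀ v (by simp [epiSet, ← hv])
    subst h; linarith
  exact ⟨_, _, isAffineMinorant_of_forall_mem_epiSet hγpos hsep⟩

theorem InGamma.exists_isAffineMinorant_gt (hg : InGamma g) {x : X} {c : ℝ} (hc : c < g x) :
    ∃ (q : X →L[ℝ] ℝ) (β : ℝ), IsAffineMinorant g q β ∧ c < q x + β := by
  obtain ⟨p, γ, u, hγ, hlt, hsep⟩ := hg.exists_separation hc.not_ge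
  rcases hγ.lt_or_eq with hγpos | rfl
  · refine ⟨_, _, isAffineMinorant_of_forall_mem_epiSet hγpos hsep, ?_⟩
    have hval : (-γ⁻¹ • p) x + u / γ = (u - p x) / γ := by
      simp only [smul_apply, smul_eq_mul]; ring
    rw [hval, lt_div_iff₀ hγpos]
    linarith
  -- a vertical separating hyperplane: tilt a minorant of `g` by multiples of `u - p`
  simp only [zero_mul, add_zero] at hlt hsep
  obtain ⟨q₀, β₀, h₀⟩ := hg.exists_isAffineMinorant
  obtain ⟨n, hn, hcn⟩ := exists_nonneg_lt_add_mul (sub_pos.2 hlt) (q₀ x + β₀) c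
  refine ⟨q₀ - n • p, β₀ + n * u, isAffineMinorant_iff_forall_mem_epiSet.2 fun z r hzr => ?_, ?_⟩
  · have h₀z := isAffineMinorant_iff_forall_mem_epiSet.1 h₀ z r hzr
    have : n * (u - p z) ≤ 0 := mul_nonpos_of_nonneg_of_nonpos hn (sub_nonpos.2 (hsep z r hzr).le)
    simp only [sub_apply, smul_apply, smul_eq_mul]
    linarith
  · simp only [sub_apply, smul_apply, smul_eq_mul]
    linarith

theorem InGamma.le_of_forall_isAffineMinorant (hg : InGamma g) {x : X} {y : EReal}
    (h : ∀ q β, IsAffineMinorant g q β → ((q x + β : ℝ) : EReal) ≤ y) : g x ≤ y := by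
  by_contra! hlt
  obtain ⟨c, hyc, hcg⟩ := EReal.lt_iff_exists_real_btwn.1 hlt
  obtain ⟨q, β, hq, hcq⟩ := hg.exists_isAffineMinorant_gt hcg
  exact (h q β hq).not_gt (hyc.trans (EReal.coe_lt_coe_iff.2 hcq))

end AffineMinorant

section Conjugate

variable {X : Type*} [AddCommGroup X] [Module ℝ X] [TopologicalSpace X]

theorem conj_le_coe_iff {f : X → EReal} {p : WeakDual ℝ X} {c : ℝ} :
    conj f p ≤ c ↔ ∀ z, ((p z - c : ℝ) : EReal) ≤ f z := by
  simp only [conj, iSup_le_iff, EReal.coe_sub_le_coe_iff]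

theorem conj_zero (f : X → EReal) : conj f 0 = -⨅ z, f z := by
  rw [EReal.neg_iInf, conj]
  refine iSup_congr fun z => ?_
  change ((0 : ℝ) : EReal) - f z = -f z
  rw [EReal.coe_zero, zero_sub]

theorem conjDual_le_coe_iff {g : WeakDual ℝ X → EReal} {x : X} {c : ℝ} :
    conjDual g x ≤ c ↔ ∀ q : WeakDual ℝ X, ((q x - c : ℝ) : EReal) ≤ g q := by
  simp only [conjDual, iSup_le_iff, EReal.coe_sub_le_coe_iff]

theorem coe_sub_le_conjDual (g : WeakDual ℝ X → EReal) (q : WeakDual ℝ X) (x : X) :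
    (q x : EReal) - g q ≤ conjDual g x :=
  le_iSup (fun q : WeakDual ℝ X => (q x : EReal) - g q) q

theorem mem_dualSubdiff_iff_conjDual_le {g : WeakDual ℝ X → EReal} {a : WeakDual ℝ X} {r : ℝ}
    (hr : g a = r) {x : X} : x ∈ dualSubdiff g a ↔ conjDual g x ≤ ((a x - r : ℝ) : EReal) := by
  simp only [dualSubdiff, Set.mem_ofPred_eq, hr, EReal.coe_ne_top, EReal.coe_ne_bot, ne_eq,
    not_false_eq_true, and_self, true_and, conjDual_le_coe_iff]
  refine forall_congr' fun q => ?_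
  rw [← EReal.coe_add]; ring_nf

theorem mem_dualSubdiff_iff_add_conjDual_eq (g : WeakDual ℝ X → EReal) (a : WeakDual ℝ X) (x : X) :
    x ∈ dualSubdiff g a ↔ g a + conjDual g x = ((a x : ℝ) : EReal) := by
  constructor
  · intro hx
    lift g a to ℝ using hx.1 with r hr
    have hle := (mem_dualSubdiff_iff_conjDual_le hr.symm).1 hx
    have hge : ((a x - r : ℝ) : EReal) ≤ conjDual g x := by
      simpa [← hr] using coe_sub_le_conjDual g a x
    rw [le_antisymm hle hge, ← EReal.coe_add, add_sub_cancel]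
  · intro h
    obtain ⟨r, s, hr, hs, hrs⟩ := EReal.exists_coe_of_add_eq_coe h
    rw [mem_dualSubdiff_iff_conjDual_le hr, hs, EReal.coe_le_coe_iff]
    linarith

end Conjugate

section Duality

variable {T : Type*} {X : Type*} {f : X → EReal} {ft : T → X → EReal} {Hfam : Set (Finset T)}

theorem lagFn_zero (H : Finset T) : lagFn f ft H 0 = f := by
  ext z; simp [lagFn]

theorem lagFn_single [DecidableEq T] {H : Finset T} {s : T} (hs : s ∈ H) (n : ℝ) :
    lagFn f ft H (Pi.single s n) = fun z => f z + n * ft s z := by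
  ext z
  rw [lagFn, Finset.sum_eq_single_of_mem s hs fun t _ hts => by simp [hts]]
  simp

theorem lagFn_le_of_mem_feasSet {H : Finset T} {lam : T → ℝ} (hlam : ∀ t ∈ H, 0 ≤ lam t)
    {z : X} (hz : z ∈ feasSet ft) : lagFn f ft H lam z ≤ f z := by
  refine add_le_of_nonpos_right (Finset.sum_nonpos fun t ht => ?_)
  exact mul_nonpos_of_nonneg_of_nonpos (EReal.coe_nonneg.2 (hlam t ht)) (hz t)

theorem dualVal_le_primalVal : dualVal f ft Hfam ≤ primalVal f ft :=
  iSup₂_le fun _ _ => iSup₂_le fun _ hlam => le_iInf₂ fun z hz =>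
    (iInf_le _ z).trans (lagFn_le_of_mem_feasSet hlam hz)

variable [AddCommGroup X] [Module ℝ X] [TopologicalSpace X]

theorem neg_phiVal_zero : -phiVal f ft Hfam 0 = dualVal f ft Hfam := by
  simp only [phiVal, dualVal, conj_zero, EReal.neg_iInf, EReal.neg_iSup, neg_neg]

theorem nonempty_of_phiVal_ne_top {p : WeakDual ℝ X} (h : phiVal f ft Hfam p ≠ ⊤) :
    Hfam.Nonempty := by
  contrapose! h
  simp [phiVal, h]

theorem coe_le_conjDual_phiVal {H : Finset T} (hH : H ∈ Hfam) {lam : T → ℝ}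
    (hlam : ∀ t ∈ H, 0 ≤ lam t) {q : X →L[ℝ] ℝ} {β : ℝ}
    (hq : IsAffineMinorant (lagFn f ft H lam) q β) (x : X) :
    ((q x + β : ℝ) : EReal) ≤ conjDual (phiVal f ft Hfam) x := by
  have hφ : phiVal f ft Hfam q ≤ ((-β : ℝ) : EReal) :=
    (iInf₂_le H hH).trans <| (iInf₂_le lam hlam).trans <|
      conj_le_coe_iff.2 fun z => by rw [sub_neg_eq_add]; exact hq z
  calc ((q x + β : ℝ) : EReal) = (q x : EReal) - ((-β : ℝ) : EReal) := by norm_cast; ring_nf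
    _ ≤ (q x : EReal) - phiVal f ft Hfam q := EReal.sub_le_sub le_rfl hφ
    _ ≤ conjDual (phiVal f ft Hfam) x := coe_sub_le_conjDual _ (q : WeakDual ℝ X) x

variable [IsTopologicalAddGroup X] [ContinuousSMul ℝ X] [LocallyConvexSpace ℝ X]

theorem le_conjDual_phiVal (hf : InGamma f) {H : Finset T} (hH : H ∈ Hfam) (x : X) :
    f x ≤ conjDual (phiVal f ft Hfam) x :=
  hf.le_of_forall_isAffineMinorant fun _ _ hq =>
    coe_le_conjDual_phiVal hH (lam := 0) (fun _ _ => le_rfl) (by rwa [lagFn_zero]) x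

theorem conjDual_phiVal_eq_top (hcov : CoveringFam Hfam) (hf : InGamma f)
    (hft : ∀ t, InGamma (ft t)) {x : X} (hx : x ∉ feasSet ft) :
    conjDual (phiVal f ft Hfam) x = ⊤ := by
  classical
  obtain ⟨s, hs⟩ : ∃ s, (((0 : ℝ)) : EReal) < ft s x := by simpa [feasSet] using hx
  obtain ⟨H, hH, hsH⟩ : ∃ H ∈ Hfam, s ∈ H := by
    simpa using (hcov.symm ▸ Set.mem_univ s : s ∈ ⋃ H ∈ Hfam, (H : Set T))
  obtain ⟨q₀, β₀, h₀⟩ := hf.exists_isAffineMinorant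
  obtain ⟨q₁, β₁, h₁, hpos⟩ := (hft s).exists_isAffineMinorant_gt hs
  refine (EReal.eq_top_iff_forall_lt _).2 fun M => ?_
  obtain ⟨n, hn, hM⟩ := exists_nonneg_lt_add_mul hpos (q₀ x + β₀) M
  have hmin : IsAffineMinorant (lagFn f ft H (Pi.single s n)) (q₀ + n • q₁) (β₀ + n * β₁) := by
    rw [lagFn_single hsH]; exact h₀.add_mul h₁ hn
  have hlam : (0 : T → ℝ) ≤ Pi.single s n := Pi.single_nonneg.2 hn
  refine lt_of_lt_of_le ?_ (coe_le_conjDual_phiVal hH (fun t _ => hlam t) hmin x)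
  norm_cast
  simp only [add_apply, smul_apply, smul_eq_mul]
  linarith

end Duality

theorem subdiff_conj_and_reverse_duality_general {T : Type*} {X : Type*} [AddCommGroup X] [Module ℝ X] [TopologicalSpace X]
    [IsTopologicalAddGroup X] [ContinuousSMul ℝ X] [LocallyConvexSpace ℝ X] :
    (∀ (g : WeakDual ℝ X → EReal) (a : WeakDual ℝ X) (x : X),
      x ∈ dualSubdiff g a ↔ g a + conjDual g x = ((a x : ℝ) : EReal)) ∧
    (∀ (f : X → EReal) (ft : T → X → EReal) (Hfam : Set (Finset T)),
      (∀ H ∈ Hfam, H.Nonempty) → CoveringFam Hfam →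
      InGamma f → (∀ t, InGamma (ft t)) →
      (∃ x ∈ feasSet ft, f x ≠ ⊤) →
      ∀ x ∈ dualSubdiff (phiVal f ft Hfam) (0 : WeakDual ℝ X),
        x ∈ feasSet ft ∧ f x = -phiVal f ft Hfam 0 ∧
        -phiVal f ft Hfam 0 = dualVal f ft Hfam ∧
        dualVal f ft Hfam = primalVal f ft) := by
  refine ⟨mem_dualSubdiff_iff_add_conjDual_eq, ?_⟩
  intro f ft Hfam _ hcov hf hft _ x hx
  obtain ⟨H, hH⟩ := nonempty_of_phiVal_ne_top hx.1.1
  obtain ⟨r, s, hr, hs, hrs⟩ :=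
    EReal.exists_coe_of_add_eq_coe ((mem_dualSubdiff_iff_add_conjDual_eq _ _ x).1 hx)
  have hxE : x ∈ feasSet ft := by
    by_contra h
    exact EReal.coe_ne_top s (hs ▸ conjDual_phiVal_eq_top hcov hf hft h)
  have hconj : conjDual (phiVal f ft Hfam) x = -phiVal f ft Hfam 0 := by
    rw [hs, hr, ← EReal.coe_neg, EReal.coe_eq_coe_iff]
    change r + s = 0 at hrs
    linarith
  have hprimal : primalVal f ft ≤ f x := iInf₂_le x hxE
  have hfx : f x ≤ dualVal f ft Hfam := by
    rw [← neg_phiVal_zero, ← hconj]; exact le_conjDual_phiVal hf hH x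
  refine ⟨hxE, ?_, neg_phiVal_zero, le_antisymm dualVal_le_primalVal (hprimal.trans hfx)⟩
  rw [neg_phiVal_zero]
  exact le_antisymm hfx (dualVal_le_primalVal.trans hprimal)

/-- for any `g : X* → ℝ̄`, `x ∈ ∂g(a*)` iff
`g(a*) + g*(x) = ⟨a*, x⟩`; in particular, for a covering family `𝓗` with
`{f; f_t} ⊆ Γ(X)` and `E ∩ dom f ≠ ∅`, any `x ∈ ∂φ_𝓗(0)` satisfies `x ∈ E` and
`f(x) = -φ_𝓗(0) = sup (D_𝓗) = inf (P)`. -/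
theorem subdiff_conj_and_reverse_duality {T : Type*} {X : Type*} [AddCommGroup X] [Module ℝ X] [TopologicalSpace X]
    [IsTopologicalAddGroup X] [ContinuousSMul ℝ X] [LocallyConvexSpace ℝ X] [T2Space X] :
    (∀ (g : WeakDual ℝ X → EReal) (a : WeakDual ℝ X) (x : X),
      x ∈ dualSubdiff g a ↔ g a + conjDual g x = ((a x : ℝ) : EReal)) ∧
    (∀ (f : X → EReal) (ft : T → X → EReal) (Hfam : Set (Finset T)),
      (∀ H ∈ Hfam, H.Nonempty) → CoveringFam Hfam →
      InGamma f → (∀ t, InGamma (ft t)) →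
      (∃ x ∈ feasSet ft, f x ≠ ⊤) →
      ∀ x ∈ dualSubdiff (phiVal f ft Hfam) (0 : WeakDual ℝ X),
        x ∈ feasSet ft ∧ f x = -phiVal f ft Hfam 0 ∧
        -phiVal f ft Hfam 0 = dualVal f ft Hfam ∧
        dualVal f ft Hfam = primalVal f ft) :=
  subdiff_conj_and_reverse_duality_general

end
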